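/- Let p ≥ q + 2 with q ≥ 1, let λ_1 > λ_2 > ... > λ_q > 0 and λ_{q+1} = ... = λ_p = 0, and set s_j = λ_j/(1 + λ_j) and s*_j = s_j²/s_{j+1}² − 1 for 1 ≤ j ≤ q − 1. For each n ∈ ℕ let λ̂_1(n), ..., λ̂_p(n) ≥ 0 satisfy |λ̂_j(n) − λ_j| ≤ K·n^{−1/2} for all n and all 1 ≤ j ≤ p, for some constant K. Let c₁(n), c₂(n) > 0 with c₁(n) → 0, c₂(n) → 0 and n·c₁(n)·c₂(n) → ∞. Set ŝ_j(n) = λ̂_j(n)/(1 + λ̂_j(n)), ŝ*_j(n) = (ŝ_j(n)² + c₁(n))/(ŝ_{j+1}(n)² + c₁(n)) − 1, and r_j(n) = (ŝ*_{j+1}(n) + c₂(n))/(ŝ*_j(n) + c₂(n)) for 1 ≤ j ≤ p − 2. Then as n → ∞: (i) if q ≥ 3, for each 1 ≤ j ≤ q − 2, r_j(n) → s*_{j+1}/s*_j, a positive finite limit; (ii) if q ≥ 2, r_{q−1}(n) → +∞; (iii) r_q(n) → 0; (iv) for each q + 1 ≤ j ≤ p − 2, r_j(n) → 1. -/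

import Mathlib

open Filter

/-- `ŝ_j = λ̂_j / (1 + λ̂_j)`. -/
noncomputable def sHat (lam : ℕ → ℝ) (j : ℕ) : ℝ := lam j / (1 + lam j)

/-- First-round ridge ratio `ŝ*_j = (ŝ_j² + c₁)/(ŝ_{j+1}² + c₁) − 1`. -/
noncomputable def sStar (lam : ℕ → ℝ) (c1 : ℝ) (j : ℕ) : ℝ :=
  ((sHat lam j) ^ 2 + c1) / ((sHat lam (j + 1)) ^ 2 + c1) - 1

/-- Second-round ridge ratio `r_j = (ŝ*_{j+1} + c₂)/(ŝ*_j + c₂)`. -/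
noncomputable def rRatio (lam : ℕ → ℝ) (c1 c2 : ℝ) (j : ℕ) : ℝ :=
  (sStar lam c1 (j + 1) + c2) / (sStar lam c1 j + c2)

/-- Population first-round ratio `s*_j = s_j²/s_{j+1}² − 1`. -/
noncomputable def sStarPop (lam : ℕ → ℝ) (j : ℕ) : ℝ :=
  (sHat lam j) ^ 2 / (sHat lam (j + 1)) ^ 2 - 1

/-!
On the signal indices `j < q` the estimates converge to positive, distinct population values, so
the ridges are negligible and `ŝ*_j → s*_j > 0`. At `j = q` the denominator `ŝ_{q+1}² + c₁` tends
to `0⁺` while the numerator does not, so `ŝ*_q → ∞`. On the noise indices every `ŝ_j²` is at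
most `K²/n`, hence `|ŝ*_j| ≤ K²/(n c₁)`, which is `o(c₂)` because `n c₁ c₂ → ∞`; there the
second ridge `c₂` dominates both ŝ* in `r_j`, forcing `r_j → 1`.
-/

open Topology

lemma tendsto_of_abs_sub_le_div_sqrt {x : ℕ → ℝ} {a K : ℝ}
    (h : ∀ n, 1 ≤ n → |x n - a| ≤ K / Real.sqrt n) : Tendsto x atTop (𝓝 a) := by
  have hK : Tendsto (fun n : ℕ => K / Real.sqrt n) atTop (𝓝 0) :=
    tendsto_const_nhds.div_atTop (Real.tendsto_sqrt_atTop.comp tendsto_natCast_atTop_atTop)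
  rw [tendsto_iff_norm_sub_tendsto_zero]
  refine squeeze_zero' (Eventually.of_forall fun n => norm_nonneg _) ?_ hK
  filter_upwards [eventually_ge_atTop 1] with n hn using h n hn

lemma tendsto_add_div_add_of_div_tendsto_zero {ι : Type*} {l : Filter ι} {x y c : ι → ℝ}
    (hc : ∀ i, c i ≠ 0) (hx : Tendsto (fun i => x i / c i) l (𝓝 0))
    (hy : Tendsto (fun i => y i / c i) l (𝓝 0)) :
    Tendsto (fun i => (x i + c i) / (y i + c i)) l (𝓝 1) := by
  have h := (hx.add_const 1).div (hy.add_const 1) (by norm_num)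
  rw [zero_add, div_one] at h
  refine h.congr fun i => ?_
  rw [Pi.div_apply, div_add_one (hc i), div_add_one (hc i), div_div_div_cancel_right₀ (hc i)]

section sHat

variable {lam : ℕ → ℝ} {i j : ℕ}

lemma sHat_pos (h : 0 < lam j) : 0 < sHat lam j :=
  div_pos h (by linarith)

lemma sHat_lt_sHat (hi : 0 ≤ lam i) (h : lam i < lam j) : sHat lam i < sHat lam j := by
  rw [sHat, sHat, div_lt_div_iff₀ (by linarith) (by linarith)]
  nlinarith

lemma sq_sHat_le_of_abs_le_div_sqrt {K : ℝ} {n : ℕ} (h0 : 0 ≤ lam j)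
    (h : |lam j| ≤ K / Real.sqrt n) : sHat lam j ^ 2 ≤ K ^ 2 / n := by
  have hs : sHat lam j ≤ lam j := div_le_self h0 (by linarith)
  calc sHat lam j ^ 2 ≤ (K / Real.sqrt n) ^ 2 :=
        pow_le_pow_left₀ (div_nonneg h0 (by linarith)) (hs.trans (abs_of_nonneg h0 ▸ h)) 2
    _ = K ^ 2 / n := by rw [div_pow, Real.sq_sqrt n.cast_nonneg]

lemma sStarPop_pos (h0 : 0 < sHat lam (j + 1)) (h : sHat lam (j + 1) < sHat lam j) :
    0 < sStarPop lam j := by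
  rw [sStarPop, sub_pos, one_lt_div (by positivity)]
  exact pow_lt_pow_left₀ h h0.le two_ne_zero

lemma abs_sStar_le {c ε : ℝ} (hc : 0 < c) (hj : sHat lam j ^ 2 ≤ ε)
    (hj1 : sHat lam (j + 1) ^ 2 ≤ ε) : |sStar lam c j| ≤ ε / c := by
  have hb := sq_nonneg (sHat lam (j + 1))
  have hden : 0 < sHat lam (j + 1) ^ 2 + c := by positivity
  have heq : sStar lam c j = (sHat lam j ^ 2 - sHat lam (j + 1) ^ 2) /
      (sHat lam (j + 1) ^ 2 + c) := by
    rw [sStar, div_sub_one hden.ne']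
    ring
  rw [heq, abs_div, abs_of_pos hden]
  refine div_le_div₀ (hb.trans hj1) ?_ hc (by linarith)
  rw [abs_sub_le_iff]
  constructor <;> nlinarith [sq_nonneg (sHat lam j)]

end sHat

section Limits

variable {ι : Type*} {l : Filter ι} {lamhat : ι → ℕ → ℝ} {lam : ℕ → ℝ} {j : ℕ}

lemma tendsto_sHat (h : Tendsto (fun i => lamhat i j) l (𝓝 (lam j))) (hj : 1 + lam j ≠ 0) :
    Tendsto (fun i => sHat (lamhat i) j) l (𝓝 (sHat lam j)) :=
  h.div (tendsto_const_nhds.add h) hj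

lemma tendsto_sStar {c : ι → ℝ}
    (hj : Tendsto (fun i => sHat (lamhat i) j) l (𝓝 (sHat lam j)))
    (hj1 : Tendsto (fun i => sHat (lamhat i) (j + 1)) l (𝓝 (sHat lam (j + 1))))
    (hc : Tendsto c l (𝓝 0)) (hne : sHat lam (j + 1) ≠ 0) :
    Tendsto (fun i => sStar (lamhat i) (c i) j) l (𝓝 (sStarPop lam j)) := by
  have h := (((hj.pow 2).add hc).div ((hj1.pow 2).add hc) (by simpa using hne)).sub_const 1
  simpa only [sStar, sStarPop, Pi.div_apply, add_zero] using h

lemma tendsto_sStar_atTop {c : ι → ℝ} {s : ℝ}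
    (hj : Tendsto (fun i => sHat (lamhat i) j) l (𝓝 s)) (hs : 0 < s)
    (hj1 : Tendsto (fun i => sHat (lamhat i) (j + 1)) l (𝓝 0))
    (hc : Tendsto c l (𝓝 0)) (hcpos : ∀ i, 0 < c i) :
    Tendsto (fun i => sStar (lamhat i) (c i) j) l atTop := by
  have hden : Tendsto (fun i => sHat (lamhat i) (j + 1) ^ 2 + c i) l (𝓝[>] 0) :=
    tendsto_nhdsWithin_iff.2 ⟨by simpa using (hj1.pow 2).add hc,
      Eventually.of_forall fun i => Set.mem_Ioi.2 (by have := hcpos i; positivity)⟩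
  have h := ((hj.pow 2).add hc).pos_mul_atTop (by simpa using pow_pos hs 2)
    hden.inv_tendsto_nhdsGT_zero
  simpa only [sStar, div_eq_mul_inv, sub_eq_add_neg, Pi.inv_apply] using
    tendsto_atTop_add_const_right _ (-1) h

lemma tendsto_sStar_div_zero {c1 c2 ε : ι → ℝ} (hc1 : ∀ i, 0 < c1 i) (hc2 : ∀ i, 0 < c2 i)
    (hj : ∀ᶠ i in l, sHat (lamhat i) j ^ 2 ≤ ε i)
    (hj1 : ∀ᶠ i in l, sHat (lamhat i) (j + 1) ^ 2 ≤ ε i)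
    (hε : Tendsto (fun i => ε i / (c1 i * c2 i)) l (𝓝 0)) :
    Tendsto (fun i => sStar (lamhat i) (c1 i) j / c2 i) l (𝓝 0) := by
  refine squeeze_zero_norm' ?_ hε
  filter_upwards [hj, hj1] with i h h1
  rw [norm_div, Real.norm_eq_abs, Real.norm_eq_abs, abs_of_pos (hc2 i), ← div_div]
  exact div_le_div_of_nonneg_right (abs_sStar_le (hc1 i) h h1) (hc2 i).le

end Limits

section rRatio

variable {ι : Type*} {l : Filter ι} {lamhat : ι → ℕ → ℝ} {c1 c2 : ι → ℝ} {j : ℕ}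

lemma tendsto_rRatio {a b : ℝ} (hj : Tendsto (fun i => sStar (lamhat i) (c1 i) j) l (𝓝 a))
    (hj1 : Tendsto (fun i => sStar (lamhat i) (c1 i) (j + 1)) l (𝓝 b))
    (hc2 : Tendsto c2 l (𝓝 0)) (ha : a ≠ 0) :
    Tendsto (fun i => rRatio (lamhat i) (c1 i) (c2 i) j) l (𝓝 (b / a)) := by
  have h := (hj1.add hc2).div (hj.add hc2) (by simpa using ha)
  rwa [add_zero, add_zero] at h

lemma tendsto_rRatio_atTop {a : ℝ} (hj : Tendsto (fun i => sStar (lamhat i) (c1 i) j) l (𝓝 a))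
    (ha : 0 < a) (hj1 : Tendsto (fun i => sStar (lamhat i) (c1 i) (j + 1) + c2 i) l atTop)
    (hc2 : Tendsto c2 l (𝓝 0)) :
    Tendsto (fun i => rRatio (lamhat i) (c1 i) (c2 i) j) l atTop := by
  simpa only [rRatio, div_eq_mul_inv] using
    hj1.atTop_mul_pos (by simpa using ha) ((hj.add hc2).inv₀ (by simpa using ha.ne'))

lemma tendsto_rRatio_zero (hc2 : Tendsto c2 l (𝓝 0)) (hc2ne : ∀ i, c2 i ≠ 0)
    (hj : Tendsto (fun i => sStar (lamhat i) (c1 i) j + c2 i) l atTop)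
    (hj1 : Tendsto (fun i => sStar (lamhat i) (c1 i) (j + 1) / c2 i) l (𝓝 0)) :
    Tendsto (fun i => rRatio (lamhat i) (c1 i) (c2 i) j) l (𝓝 0) := by
  have h := (hj1.mul hc2).add hc2
  simp only [zero_mul, add_zero, div_mul_cancel₀ _ (hc2ne _)] at h
  exact h.div_atTop hj

lemma tendsto_rRatio_one (hc2ne : ∀ i, c2 i ≠ 0)
    (hj : Tendsto (fun i => sStar (lamhat i) (c1 i) j / c2 i) l (𝓝 0))
    (hj1 : Tendsto (fun i => sStar (lamhat i) (c1 i) (j + 1) / c2 i) l (𝓝 0)) :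
    Tendsto (fun i => rRatio (lamhat i) (c1 i) (c2 i) j) l (𝓝 1) :=
  tendsto_add_div_add_of_div_tendsto_zero hc2ne hj1 hj

end rRatio

/-- Limits of the second-round (double) ridge ratios.  With population eigenvalues
`λ_1 > ... > λ_q > 0 = λ_{q+1} = ... = λ_p`, estimates `λ̂_j(n) ≥ 0` satisfying
`|λ̂_j(n) − λ_j| ≤ K·n^{−1/2}`, ridges `c₁(n) → 0`, `c₂(n) → 0`, `n·c₁(n)·c₂(n) → ∞`:
(i) if `q ≥ 3`, for `1 ≤ j ≤ q − 2`, `r_j(n) → s*_{j+1}/s*_j`, a positive finite limit;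
(ii) if `q ≥ 2`, `r_{q−1}(n) → +∞`; (iii) `r_q(n) → 0`;
(iv) for `q + 1 ≤ j ≤ p − 2`, `r_j(n) → 1`. -/
theorem rRatio_limits (p q : ℕ) (hq : 1 ≤ q) (hpq : q + 2 ≤ p)
    (lam : ℕ → ℝ)
    (hdec : ∀ i j, 1 ≤ i → i < j → j ≤ q → lam j < lam i)
    (hpos : 0 < lam q)
    (hzero : ∀ j, q < j → j ≤ p → lam j = 0)
    (lamhat : ℕ → ℕ → ℝ)
    (hnn : ∀ n j, 1 ≤ j → j ≤ p → 0 ≤ lamhat n j)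
    (K : ℝ)
    (hrate : ∀ n, 1 ≤ n → ∀ j, 1 ≤ j → j ≤ p → |lamhat n j - lam j| ≤ K / Real.sqrt n)
    (c1 c2 : ℕ → ℝ) (hc1pos : ∀ n, 0 < c1 n) (hc2pos : ∀ n, 0 < c2 n)
    (hc1 : Tendsto c1 atTop (nhds 0)) (hc2 : Tendsto c2 atTop (nhds 0))
    (hncc : Tendsto (fun n : ℕ => (n : ℝ) * c1 n * c2 n) atTop atTop) :
    (3 ≤ q → ∀ j, 1 ≤ j → j ≤ q - 2 →
      Tendsto (fun n => rRatio (lamhat n) (c1 n) (c2 n) j) atTop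
        (nhds (sStarPop lam (j + 1) / sStarPop lam j)) ∧
      0 < sStarPop lam (j + 1) / sStarPop lam j) ∧
    (2 ≤ q →
      Tendsto (fun n => rRatio (lamhat n) (c1 n) (c2 n) (q - 1)) atTop atTop) ∧
    Tendsto (fun n => rRatio (lamhat n) (c1 n) (c2 n) q) atTop (nhds 0) ∧
    (∀ j, q + 1 ≤ j → j ≤ p - 2 →
      Tendsto (fun n => rRatio (lamhat n) (c1 n) (c2 n) j) atTop (nhds 1)) := by
  have lam_pos : ∀ j, 1 ≤ j → j ≤ q → 0 < lam j := fun j h1 h2 =>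
    h2.eq_or_lt.elim (fun h => h ▸ hpos) fun h => hpos.trans (hdec j q h1 h le_rfl)
  have sHat_tendsto : ∀ j, 1 ≤ j → j ≤ p →
      Tendsto (fun n => sHat (lamhat n) j) atTop (𝓝 (sHat lam j)) := by
    intro j h1 h2
    have hlam : 0 ≤ lam j := if hj : j ≤ q then (lam_pos j h1 hj).le
      else (hzero j (by omega) h2).ge
    exact tendsto_sHat (tendsto_of_abs_sub_le_div_sqrt fun n hn => hrate n hn j h1 h2)
      (by linarith)
  have signal : ∀ j, 1 ≤ j → j + 1 ≤ q →
      Tendsto (fun n => sStar (lamhat n) (c1 n) j) atTop (𝓝 (sStarPop lam j)) ∧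
        0 < sStarPop lam j := by
    intro j h1 h2
    have hs := sHat_pos (lam_pos (j + 1) (by omega) h2)
    exact ⟨tendsto_sStar (sHat_tendsto j h1 (by omega)) (sHat_tendsto (j + 1) (by omega)
      (by omega)) hc1 hs.ne', sStarPop_pos hs (sHat_lt_sHat (lam_pos (j + 1) (by omega) h2).le
      (hdec j (j + 1) h1 (by omega) h2))⟩
  have gap : Tendsto (fun n => sStar (lamhat n) (c1 n) q + c2 n) atTop atTop := by
    refine (tendsto_sStar_atTop (sHat_tendsto q hq (by omega)) (sHat_pos (lam_pos q hq le_rfl))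
      ?_ hc1 hc1pos).atTop_add hc2
    simpa [sHat, hzero (q + 1) (by omega) (by omega)] using
      sHat_tendsto (q + 1) (by omega) (by omega)
  have noise : ∀ j, q < j → j + 1 ≤ p →
      Tendsto (fun n => sStar (lamhat n) (c1 n) j / c2 n) atTop (𝓝 0) := by
    have sq_le : ∀ j, q < j → j ≤ p → ∀ᶠ n in atTop, sHat (lamhat n) j ^ 2 ≤ K ^ 2 / n :=
      fun j h1 h2 => eventually_atTop.2 ⟨1, fun n hn => sq_sHat_le_of_abs_le_div_sqrt
        (hnn n j (by omega) h2) (by simpa [hzero j h1 h2] using hrate n hn j (by omega) h2)⟩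
    intro j h1 h2
    refine tendsto_sStar_div_zero hc1pos hc2pos (sq_le j h1 (by omega)) (sq_le (j + 1)
      (by omega) h2) ?_
    simpa only [div_div, mul_assoc] using tendsto_const_nhds.div_atTop hncc
  refine ⟨fun _ j h1 h2 => ?_, fun h2 => ?_, ?_, fun j h1 h2 => ?_⟩
  · obtain ⟨hj, hj_pos⟩ := signal j h1 (by omega)
    obtain ⟨hj1, hj1_pos⟩ := signal (j + 1) (by omega) (by omega)
    exact ⟨tendsto_rRatio hj hj1 hc2 hj_pos.ne', div_pos hj1_pos hj_pos⟩
  · obtain ⟨h, h_pos⟩ := signal (q - 1) (by omega) (by omega)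
    exact tendsto_rRatio_atTop h h_pos (by rwa [Nat.sub_add_cancel hq]) hc2
  · exact tendsto_rRatio_zero hc2 (fun n => (hc2pos n).ne') gap
      (noise (q + 1) (by omega) (by omega))
  · exact tendsto_rRatio_one (fun n => (hc2pos n).ne') (noise j (by omega) (by omega))
      (noise (j + 1) (by omega) (by omega))
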